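/- arXiv:1908.06821 — 4 statements merged into one kernel-verified Lean document; each statement's English description precedes it below -/
import Mathlib

section
/- Let d = (d_1 ≥ d_2 ≥ ⋯ ≥ d_n) be a graphical degree sequence with d_1 ≥ 1. If d_1 + d_{n+1-d_1} > n, then d is not potentially bipartite. -/
/-- Let `d = (d_1 ≥ ⋯ ≥ d_n)` be a graphical degree sequence with `d_1 ≥ 1`.
If `d_1 + d_{n+1-d_1} > n`, then `d` is not potentially bipartite.
(Indices here are 0-based, so `d_1` is `d ⟨0, _⟩` and `d_{n+1-d_1}` is
`d ⟨n - d_1, _⟩`.) -/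
theorem not_potentially_bipartite_of_small_degree_condition
    (n : ℕ) (hn : 0 < n) (d : Fin n → ℕ) (hd : Antitone d)
    (h1 : 0 < d ⟨0, hn⟩)
    (hgr : ∃ (G : SimpleGraph (Fin n)) (_ : DecidableRel G.Adj), ∀ i, G.degree i = d i)
    (hcond : n < d ⟨0, hn⟩ + d ⟨n - d ⟨0, hn⟩, Nat.sub_lt hn h1⟩) :
    ¬ ∃ (G : SimpleGraph (Fin n)) (_ : DecidableRel G.Adj),
      (∀ i, G.degree i = d i) ∧
      ∃ C : Set (Fin n), ∀ ⦃u v⦄, G.Adj u v → (u ∈ C ↔ v ∉ C) := by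
  rintro ⟨G, inst, hdeg, C, hC⟩
  classical
  have hkn : d ⟨0, hn⟩ < n := by
    rw [← hdeg ⟨0, hn⟩]
    simpa using G.degree_lt_card_verts ⟨0, hn⟩
  set k := d ⟨0, hn⟩ with hk
  have hcond' : n < k + d ⟨n - k, Nat.sub_lt hn h1⟩ := hcond
  set v₀ : Fin n := ⟨0, hn⟩ with hv₀
  set P : Fin n → Prop := fun x => (x ∈ C ↔ v₀ ∈ C) with hP
  have hPv₀ : P v₀ := Iff.rfl
  have hflip : ∀ {u v : Fin n}, G.Adj u v → (P u ↔ ¬ P v) := by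
    intro u v huv
    have h := hC huv
    by_cases hv : v₀ ∈ C <;> by_cases hu : u ∈ C <;> by_cases hw : v ∈ C <;>
      simp only [hP] <;> tauto
  set A : Finset (Fin n) := Finset.univ.filter P with hA
  set B : Finset (Fin n) := Finset.univ.filter (fun x => ¬ P x) with hB
  have hAB : A.card + B.card = n := by
    rw [hA, hB]
    simpa using Finset.card_filter_add_card_filter_not (s := Finset.univ) P
  -- neighbors of v₀ lie in B
  have hnb : G.neighborFinset v₀ ⊆ B := by
    intro u hu
    rw [SimpleGraph.mem_neighborFinset] at hu
    rw [hB, Finset.mem_filter]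
    exact ⟨Finset.mem_univ u, (hflip hu).mp hPv₀⟩
  have hkB : k ≤ B.card := by
    have := Finset.card_le_card hnb
    rwa [G.card_neighborFinset_eq_degree, hdeg] at this
  have hAcard : A.card ≤ n - k := by omega
  -- every vertex with small index satisfies P
  have hhigh : ∀ i : Fin n, (i : ℕ) ≤ n - k → P i := by
    intro i hi
    by_contra hPi
    have hnb' : G.neighborFinset i ⊆ A := by
      intro u hu
      rw [SimpleGraph.mem_neighborFinset] at hu
      rw [hA, Finset.mem_filter]
      refine ⟨Finset.mem_univ u, ?_⟩
      by_contra hPu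
      exact hPi ((hflip hu).mpr hPu)
    have hdi : d i ≤ A.card := by
      have := Finset.card_le_card hnb'
      rwa [G.card_neighborFinset_eq_degree, hdeg] at this
    have hmono : d ⟨n - k, Nat.sub_lt hn h1⟩ ≤ d i := hd hi
    omega
  -- there are n - k + 1 such vertices, all in A, contradicting |A| ≤ n - k
  have hinj : n - k + 1 ≤ A.card := by
    have hcard := Finset.card_le_card_of_injOn
      (s := (Finset.univ : Finset (Fin (n - k + 1)))) (t := A)
      (fun i => (⟨(i : ℕ), by have := i.isLt; omega⟩ : Fin n))
      (fun i _ =>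
        Finset.mem_filter.mpr ⟨Finset.mem_univ _, hhigh _ (Nat.lt_succ_iff.mp i.isLt)⟩)
      (fun a _ b _ hab => Fin.ext (by simpa [Fin.ext_iff] using hab))
    simpa using hcard
  omega
end

section
/- Let d = (d_1 ≥ d_2 ≥ ⋯ ≥ d_n) be a graphical degree sequence. If ∑_{i=1}^{n-d_1} d_i < |d|/2, then d is not potentially bipartite. -/
open Finset

/-- Sum over any set of at most `m` indices is at most the sum over the first `m` indices,
for an antitone function. -/
lemma sum_le_initial_seg (n m : ℕ) (hm : m ≤ n) (d : Fin n → ℕ) (hd : Antitone d)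
    (S : Finset (Fin n)) (hS : S.card ≤ m) :
    ∑ i ∈ S, d i ≤ ∑ i ∈ Finset.univ.filter (fun i : Fin n => (i : ℕ) < m), d i := by
  set T := Finset.univ.filter (fun i : Fin n => (i : ℕ) < m) with hT
  have hTcard : T.card = m := by
    have h : ∀ k ∈ Finset.range m, k < n := fun k hk =>
      lt_of_lt_of_le (Finset.mem_range.mp hk) hm
    have : T = (Finset.range m).attachFin h := by
      ext a
      simp [hT, Finset.mem_attachFin]
    rw [this, Finset.card_attachFin, Finset.card_range]
  rcases Nat.eq_zero_or_pos m with hm0 | hm0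
  · have : S = ∅ := Finset.card_eq_zero.mp (le_antisymm (hm0 ▸ hS) (Nat.zero_le _))
    simp [this]
  · have hmn : m - 1 < n := by omega
    set c := d ⟨m - 1, hmn⟩ with hc
    have hcard : (S \ T).card ≤ (T \ S).card := by
      have h1 := Finset.card_sdiff_add_card_inter S T
      have h2 := Finset.card_sdiff_add_card_inter T S
      rw [Finset.inter_comm] at h2
      omega
    have h1 : ∑ i ∈ S \ T, d i ≤ (S \ T).card * c := by
      have := Finset.sum_le_card_nsmul (S \ T) d c ?_
      · simpa using this
      · intro i hi
        have hi' : ¬ ((i : ℕ) < m) := by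
          have := Finset.mem_sdiff.mp hi
          simpa [hT] using this.2
        apply hd
        show (⟨m - 1, hmn⟩ : Fin n) ≤ i
        simp only [Fin.le_def]
        omega
    have h2 : (T \ S).card * c ≤ ∑ i ∈ T \ S, d i := by
      have := Finset.card_nsmul_le_sum (T \ S) d c ?_
      · simpa using this
      · intro i hi
        have hi' : (i : ℕ) < m := by
          have := Finset.mem_sdiff.mp hi
          simpa [hT] using this.1
        apply hd
        show i ≤ (⟨m - 1, hmn⟩ : Fin n)
        simp only [Fin.le_def]
        omega
    have h3 : ∑ i ∈ S ∩ T, d i + ∑ i ∈ S \ T, d i = ∑ i ∈ S, d i :=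
      Finset.sum_inter_add_sum_sdiff S T d
    have h4 : ∑ i ∈ T ∩ S, d i + ∑ i ∈ T \ S, d i = ∑ i ∈ T, d i :=
      Finset.sum_inter_add_sum_sdiff T S d
    rw [Finset.inter_comm] at h4
    have : ∑ i ∈ S \ T, d i ≤ ∑ i ∈ T \ S, d i :=
      le_trans h1 (le_trans (Nat.mul_le_mul_right c hcard) h2)
    omega

/-- Let `d = (d_1 ≥ ⋯ ≥ d_n)` be a graphical degree sequence. If the sum of the
first `n - d_1` terms of `d` is less than `|d| / 2`, then `d` is not potentially
bipartite. (Indices here are 0-based, so the first `n - d_1` terms are those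
with index `i < n - d_1`.) -/
theorem not_potentially_bipartite_of_large_degree_condition
    (n : ℕ) (hn : 0 < n) (d : Fin n → ℕ) (hd : Antitone d)
    (hgr : ∃ (G : SimpleGraph (Fin n)) (_ : DecidableRel G.Adj), ∀ i, G.degree i = d i)
    (hcond : 2 * ∑ i ∈ Finset.univ.filter (fun i : Fin n => (i : ℕ) < n - d ⟨0, hn⟩), d i
      < ∑ i, d i) :
    ¬ ∃ (G : SimpleGraph (Fin n)) (_ : DecidableRel G.Adj),
      (∀ i, G.degree i = d i) ∧
      ∃ C : Set (Fin n), ∀ ⦃u v⦄, G.Adj u v → (u ∈ C ↔ v ∉ C) := by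
  classical
  rintro ⟨G, inst, hdeg, C, hC⟩
  set v0 : Fin n := ⟨0, hn⟩ with hv0
  set d0 := d v0 with hd0
  have hd0lt : d0 < n := by
    have := G.degree_lt_card_verts v0
    rw [hdeg v0] at this
    simpa using this
  set CF : Finset (Fin n) := Finset.univ.filter (· ∈ C) with hCF
  have hmemCF : ∀ i : Fin n, i ∈ CF ↔ i ∈ C := by
    intro i; simp [hCF]
  -- degree as indicator sum
  have hdind : ∀ i : Fin n, d i = ∑ j, if G.Adj i j then 1 else 0 := by
    intro i
    rw [← hdeg i, SimpleGraph.degree, SimpleGraph.neighborFinset_eq_filter,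
      Finset.card_filter]
  -- sums on the two sides are equal
  have hsides : ∑ i ∈ CF, d i = ∑ i ∈ CFᶜ, d i := by
    have e1 : ∑ i ∈ CF, d i = ∑ i ∈ CF, ∑ j ∈ CFᶜ, if G.Adj i j then 1 else 0 := by
      refine Finset.sum_congr rfl fun i hi => ?_
      rw [hdind i]
      rw [eq_comm]
      apply Finset.sum_subset (Finset.subset_univ _)
      intro j _ hj
      rw [Finset.mem_compl, hmemCF] at hj
      push_neg at hj
      have : ¬ G.Adj i j := fun h => ((hC h).mp ((hmemCF i).mp hi)) hj
      simp [this]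
    have e2 : ∑ i ∈ CFᶜ, d i = ∑ i ∈ CFᶜ, ∑ j ∈ CF, if G.Adj i j then 1 else 0 := by
      refine Finset.sum_congr rfl fun i hi => ?_
      rw [hdind i]
      rw [eq_comm]
      apply Finset.sum_subset (Finset.subset_univ _)
      intro j _ hj
      rw [hmemCF] at hj
      rw [Finset.mem_compl, hmemCF] at hi
      have : ¬ G.Adj i j := fun h => hi ((hC h).mpr hj)
      simp [this]
    rw [e1, e2, Finset.sum_comm]
    refine Finset.sum_congr rfl fun i _ => Finset.sum_congr rfl fun j _ => ?_
    simp [G.adj_comm]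
  have htotal : ∑ i ∈ CF, d i + ∑ i ∈ CFᶜ, d i = ∑ i, d i :=
    Finset.sum_add_sum_compl CF d
  -- choose the side S containing v0's "far" part: S = side containing v0
  set S : Finset (Fin n) := if v0 ∈ C then CF else CFᶜ with hS
  have hScard : S.card ≤ n - d0 := by
    -- all neighbors of v0 lie in the complement of S
    have hnbr : G.neighborFinset v0 ⊆ Sᶜ := by
      intro j hj
      rw [SimpleGraph.mem_neighborFinset] at hj
      rw [Finset.mem_compl, hS]
      by_cases h0 : v0 ∈ C
      · simp only [if_pos h0, hmemCF]
        exact (hC hj).mp h0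
      · simp only [if_neg h0, Finset.mem_compl, hmemCF, not_not]
        by_contra hjC
        exact h0 ((hC hj).mpr hjC)
    have h1 : d0 ≤ Sᶜ.card := by
      have := Finset.card_le_card hnbr
      rwa [SimpleGraph.card_neighborFinset_eq_degree, hdeg v0] at this
    have h2 : Sᶜ.card = n - S.card := by
      rw [Finset.card_compl]; simp
    have h3 : S.card ≤ n := by
      simpa using Finset.card_le_card (Finset.subset_univ S)
    omega
  have hsumS : 2 * ∑ i ∈ S, d i = ∑ i, d i := by
    rw [hS]
    by_cases h0 : v0 ∈ C <;> simp only [if_pos, if_neg, h0, ite_true, ite_false] <;> omega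
  have hle : ∑ i ∈ S, d i
      ≤ ∑ i ∈ Finset.univ.filter (fun i : Fin n => (i : ℕ) < n - d0), d i :=
    sum_le_initial_seg n (n - d0) (Nat.sub_le n d0) d hd S hScard
  omega
end

section
/- Let d = (d_1 ≥ d_2 ≥ ⋯ ≥ d_n) be a graphical degree sequence. If ∑_{i : d_i > n - d_1} d_i > |d|/2, then d is not potentially bipartite. -/
open Finset

/-- Let `d = (d_1 ≥ ⋯ ≥ d_n)` be a graphical degree sequence. If the sum of
those terms `d_i` with `d_i > n - d_1` exceeds `|d| / 2`, then `d` is not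
potentially bipartite. -/
theorem not_potentially_bipartite_of_fixed_degree_condition
    (n : ℕ) (hn : 0 < n) (d : Fin n → ℕ) (hd : Antitone d)
    (hgr : ∃ (G : SimpleGraph (Fin n)) (_ : DecidableRel G.Adj), ∀ i, G.degree i = d i)
    (hcond : ∑ i, d i
      < 2 * ∑ i ∈ Finset.univ.filter (fun i : Fin n => n - d ⟨0, hn⟩ < d i), d i) :
    ¬ ∃ (G : SimpleGraph (Fin n)) (_ : DecidableRel G.Adj),
      (∀ i, G.degree i = d i) ∧
      ∃ C : Set (Fin n), ∀ ⦃u v⦄, G.Adj u v → (u ∈ C ↔ v ∉ C) := by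
  classical
  rintro ⟨G, inst, hdeg, C, hC⟩
  set v0 : Fin n := ⟨0, hn⟩ with hv0
  obtain ⟨D, hD, h0⟩ : ∃ D : Set (Fin n), (∀ ⦃u v⦄, G.Adj u v → (u ∈ D ↔ v ∉ D)) ∧ v0 ∈ D := by
    by_cases h : v0 ∈ C
    · exact ⟨C, hC, h⟩
    · refine ⟨Cᶜ, ?_, h⟩
      intro u v huv
      have := hC huv
      simp only [Set.mem_compl_iff]
      tauto
  set F : Finset (Fin n) := Finset.univ.filter (fun i => i ∈ D) with hF
  have hFmem : ∀ i, i ∈ F ↔ i ∈ D := by intro i; simp [hF]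
  have hnbC : ∀ i ∈ F, G.neighborFinset i ⊆ Fᶜ := by
    intro i hi w hw
    rw [SimpleGraph.mem_neighborFinset] at hw
    have := hD hw
    simp only [Finset.mem_compl, hFmem] at *
    tauto
  have hnbCc : ∀ i, i ∉ F → G.neighborFinset i ⊆ F := by
    intro i hi w hw
    rw [SimpleGraph.mem_neighborFinset] at hw
    have := hD hw
    simp only [hFmem] at *
    tauto
  have hdegcard : ∀ i, (G.neighborFinset i).card = d i := by
    intro i; rw [← hdeg i]; rfl
  have hcard0 : d v0 ≤ Fᶜ.card := by
    rw [← hdegcard v0]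
    exact card_le_card (hnbC v0 ((hFmem v0).2 h0))
  have hFcardn : F.card ≤ n := by
    simpa using card_le_card (subset_univ F)
  have hcompl : Fᶜ.card = n - F.card := by
    simp [card_compl]
  have hS : Finset.univ.filter (fun i : Fin n => n - d v0 < d i) ⊆ F := by
    intro i hi
    simp only [mem_filter, mem_univ, true_and] at hi
    by_contra hiF
    have h1 : d i ≤ F.card := by
      rw [← hdegcard i]; exact card_le_card (hnbCc i hiF)
    omega
  have hsum : ∑ i ∈ F, d i = ∑ i ∈ Fᶜ, d i := by
    have h1 : ∀ i ∈ F, d i = ∑ j ∈ Fᶜ, if G.Adj i j then 1 else 0 := by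
      intro i hi
      rw [← hdegcard i, ← Finset.card_filter]
      congr 1
      ext w
      simp only [mem_filter]
      constructor
      · intro hw
        refine ⟨hnbC i hi hw, ?_⟩
        rwa [SimpleGraph.mem_neighborFinset] at hw
      · intro hw
        rw [SimpleGraph.mem_neighborFinset]
        exact hw.2
    have h2 : ∀ j, j ∈ Fᶜ → d j = ∑ i ∈ F, if G.Adj j i then 1 else 0 := by
      intro j hj
      rw [← hdegcard j, ← Finset.card_filter]
      congr 1
      ext w
      simp only [mem_filter]
      constructor
      · intro hw
        refine ⟨hnbCc j (by simpa using hj) hw, ?_⟩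
        rwa [SimpleGraph.mem_neighborFinset] at hw
      · intro hw
        rw [SimpleGraph.mem_neighborFinset]
        exact hw.2
    calc ∑ i ∈ F, d i = ∑ i ∈ F, ∑ j ∈ Fᶜ, if G.Adj i j then 1 else 0 :=
          Finset.sum_congr rfl h1
      _ = ∑ j ∈ Fᶜ, ∑ i ∈ F, if G.Adj j i then 1 else 0 := by
          rw [Finset.sum_comm]
          exact Finset.sum_congr rfl (fun j _ => Finset.sum_congr rfl (fun i _ => by
            simp [G.adj_comm]))
      _ = ∑ j ∈ Fᶜ, d j := (Finset.sum_congr rfl h2).symm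
  have htot : ∑ i, d i = 2 * ∑ i ∈ F, d i := by
    rw [← Finset.sum_add_sum_compl F d, hsum]; ring
  have hle : ∑ i ∈ Finset.univ.filter (fun i : Fin n => n - d v0 < d i), d i ≤ ∑ i ∈ F, d i :=
    Finset.sum_le_sum_of_subset hS
  omega
end

section
/- A graphical degree sequence d = (d_1 ≥ d_2 ≥ ⋯ ≥ d_n) is potentially bipartite if and only if the terms of d can be partitioned into two nonincreasing subsequences a and b with equal weights |a| = |b| = |d|/2 such that the conjugate of a dominates b. -/
/-!
If `G` is bipartite with sides `S` and `T`, the degrees on either side add up to the number of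
edges, and any `j` vertices of `T` receive at most `min (deg v) j` edges from each `v ∈ S`;
summed over `S` this is the `j`-th partial sum of the conjugate of the degrees on `S`.

Conversely (Gale–Ryser), start from the Ferrers matrix of `a`, whose column sums form `a*`.
While the column sums differ from `b`, move a one, inside some row, from the first column with
an excess to the first column with a deficit; since `b` is nonincreasing such a row exists. This
keeps the column prefix sums above those of `b` and strictly decreases their total, so it ends
with a 0-1 matrix with row sums `a` and column sums `b`: the biadjacency matrix of a bipartite
realization.
-/

open Finset

section PrefixSum

variable {k : ℕ}

def prefixSum (g : Fin k → ℕ) (j : ℕ) : ℕ :=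
  ∑ c ∈ univ.filter (fun c : Fin k => (c : ℕ) < j), g c

theorem prefixSum_of_le (g : Fin k → ℕ) {j : ℕ} (hj : k ≤ j) :
    prefixSum g j = ∑ c, g c := by
  rw [prefixSum, filter_true_of_mem fun c _ => c.isLt.trans_le hj]

theorem prefixSum_succ (g : Fin k → ℕ) (c : Fin k) :
    prefixSum g (c + 1) = prefixSum g c + g c := by
  have : univ.filter (fun c' : Fin k => (c' : ℕ) < c + 1) =
      insert c (univ.filter fun c' : Fin k => (c' : ℕ) < c) := by
    ext c'
    simp [le_iff_eq_or_lt, Fin.val_inj]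
  rw [prefixSum, prefixSum, this, sum_insert (by simp), add_comm]

theorem prefixSum_add (g h : Fin k → ℕ) (j : ℕ) :
    prefixSum (g + h) j = prefixSum g j + prefixSum h j :=
  sum_add_distrib

theorem prefixSum_single (i : Fin k) (j : ℕ) :
    prefixSum (Pi.single i 1) j = if (i : ℕ) < j then 1 else 0 := by
  simp [prefixSum, Pi.single_apply]

theorem prefixSum_congr {g h : Fin k → ℕ} {j : ℕ}
    (hgh : ∀ c : Fin k, (c : ℕ) < j → g c = h c) :
    prefixSum g j = prefixSum h j :=
  sum_congr rfl fun c hc => hgh c (mem_filter.1 hc).2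

end PrefixSum

theorem sum_Icc_card_le_eq_sum_min {ι : Type*} [Fintype ι] (a : ι → ℕ) (j : ℕ) :
    ∑ i ∈ Icc 1 j, #{t | i ≤ a t} = ∑ t, min (a t) j := by
  simp_rw [card_filter]
  rw [sum_comm]
  refine sum_congr rfl fun t _ => ?_
  rw [← card_filter, show {i ∈ Icc 1 j | i ≤ a t} = Icc 1 (min (a t) j) by ext; simp; omega]
  simp

section ColCard

variable {ι β : Type*} [Fintype ι] [DecidableEq β]

/-- `f` is read as a 0-1 matrix whose row `t` has support `f t`. -/
def colCard (f : ι → Finset β) (c : β) : ℕ := #{t | c ∈ f t}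

theorem colCard_update [DecidableEq ι] (f : ι → Finset β) (t : ι) (s : Finset β) (c : β) :
    colCard (Function.update f t s) c + (if c ∈ f t then 1 else 0) =
      colCard f c + (if c ∈ s then 1 else 0) := by
  simp only [colCard, card_filter, ← add_sum_erase _ _ (mem_univ t), Function.update_self]
  rw [sum_congr rfl fun t' ht' => by rw [Function.update_of_ne (ne_of_mem_erase ht')]]
  ring

theorem colCard_update_insert_erase [DecidableEq ι] {f : ι → Finset β} {t : ι}
    {i j : β} (hi : i ∈ f t) (hj : j ∉ f t) :
    colCard (Function.update f t (insert j ((f t).erase i))) + Pi.single i 1 =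
      colCard f + Pi.single j 1 := by
  ext c
  have h := colCard_update f t (insert j ((f t).erase i)) c
  simp only [Pi.add_apply, Pi.single_apply, mem_insert, mem_erase] at h ⊢
  by_cases hci : c = i <;> by_cases hcj : c = j <;> simp_all

theorem exists_mem_not_mem_of_colCard_lt {f : ι → Finset β} {i j : β}
    (h : colCard f j < colCard f i) : ∃ t, i ∈ f t ∧ j ∉ f t := by
  by_contra! H
  refine h.not_ge (card_le_card fun t ht => ?_)
  simp only [mem_filter, mem_univ, true_and] at ht ⊢
  exact H t ht

variable {k : ℕ}

theorem prefixSum_colCard (f : ι → Finset (Fin k)) (j : ℕ) :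
    prefixSum (colCard f) j = ∑ t, #((f t).filter fun c : Fin k => (c : ℕ) < j) := by
  simp only [prefixSum, colCard, card_filter]
  rw [sum_comm]
  refine sum_congr rfl fun t _ => ?_
  simp only [sum_boole, Nat.cast_id, filter_filter]
  congr 1
  ext c
  simp [and_comm]

end ColCard

section GaleRyser

variable {k : ℕ}

theorem exists_excess_deficit_of_prefixSum_le {g b : Fin k → ℕ}
    (hdom : ∀ j, prefixSum b j ≤ prefixSum g j) (htot : ∑ c, b c = ∑ c, g c)
    (hne : g ≠ b) :
    ∃ i j : Fin k, i < j ∧ b i < g i ∧ g j < b j ∧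
      ∀ l : ℕ, (i : ℕ) < l → l ≤ j → prefixSum b l < prefixSum g l := by
  obtain ⟨i, hi, hi_min⟩ := exists_min_image {c | g c ≠ b c} id
    (by obtain ⟨c, hc⟩ := Function.ne_iff.1 hne; exact ⟨c, by simpa using hc⟩)
  simp only [mem_filter, mem_univ, true_and, id] at hi hi_min
  have hpre : prefixSum b i = prefixSum g i :=
    prefixSum_congr fun c hc => by_contra fun h => (hi_min c (Ne.symm h)).not_gt hc
  have hgi : b i < g i := by
    have := hdom (i + 1)
    rw [prefixSum_succ, prefixSum_succ, hpre] at this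
    omega
  obtain ⟨j, hj, hj_min⟩ := exists_min_image {c | g c < b c} id (by
    by_contra! H
    refine (sum_lt_sum (fun c _ => ?_) ⟨i, mem_univ i, hgi⟩).ne htot
    simpa using filter_eq_empty_iff.1 H (mem_univ c))
  simp only [mem_filter, mem_univ, true_and, id] at hj hj_min
  have hij : i < j := lt_of_le_of_ne (hi_min j hj.ne) (by rintro rfl; omega)
  refine ⟨i, j, hij, hgi, hj, fun l hil hlj => ?_⟩
  induction l, hil using Nat.le_induction with
  | base => rw [prefixSum_succ, prefixSum_succ, hpre]; omega
  | succ l hil ih =>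
    have hl : l < k := by omega
    have hg : prefixSum g (l + 1) = prefixSum g l + g ⟨l, hl⟩ := prefixSum_succ g ⟨l, hl⟩
    have hb : prefixSum b (l + 1) = prefixSum b l + b ⟨l, hl⟩ := prefixSum_succ b ⟨l, hl⟩
    have : b ⟨l, hl⟩ ≤ g ⟨l, hl⟩ :=
      not_lt.1 fun h => (hj_min _ h).not_gt (Fin.lt_def.2 (show l < (j : ℕ) by omega))
    omega

variable {ι : Type*} [Fintype ι] {b : Fin k → ℕ}

theorem exists_move_of_colCard_ne [DecidableEq ι] (hb : Antitone b) {f : ι → Finset (Fin k)}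
    (hdom : ∀ j, prefixSum b j ≤ prefixSum (colCard f) j)
    (htot : ∑ c, b c = ∑ c, colCard f c) (hne : colCard f ≠ b) :
    ∃ f' : ι → Finset (Fin k), (∀ t, #(f' t) = #(f t)) ∧
      (∀ j, prefixSum b j ≤ prefixSum (colCard f') j) ∧ ∑ c, b c = ∑ c, colCard f' c ∧
      ∑ j ∈ range (k + 1), prefixSum (colCard f') j <
        ∑ j ∈ range (k + 1), prefixSum (colCard f) j := by
  obtain ⟨i, j, hij, hi, hj, hstrict⟩ := exists_excess_deficit_of_prefixSum_le hdom htot hne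
  obtain ⟨t, hit, hjt⟩ := exists_mem_not_mem_of_colCard_lt (f := f) (i := i) (j := j)
    (by have := hb hij.le; omega)
  -- Prefix sums drop by one exactly on `(i, j]`, where they strictly exceed those of `b`.
  set f' := Function.update f t (insert j ((f t).erase i))
  have hshift (l : ℕ) : prefixSum (colCard f') l + (if (i : ℕ) < l then 1 else 0) =
      prefixSum (colCard f) l + (if (j : ℕ) < l then 1 else 0) := by
    rw [← prefixSum_single, ← prefixSum_single, ← prefixSum_add, ← prefixSum_add,
      colCard_update_insert_erase hit hjt]
  have hij' : (i : ℕ) < j := hij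
  have hle (l : ℕ) : prefixSum (colCard f') l ≤ prefixSum (colCard f) l := by
    have := hshift l
    split_ifs at this <;> omega
  refine ⟨f', fun t' => ?_, fun l => ?_, ?_, ?_⟩
  · rcases eq_or_ne t' t with rfl | ht
    · simp only [f', Function.update_self]
      rw [card_insert_of_notMem fun h => hjt (mem_of_mem_erase h), card_erase_add_one hit]
    · simp only [f', Function.update_of_ne ht]
  · have hs := hshift l
    have := hdom l
    by_cases hil : (i : ℕ) < l
    · by_cases hjl : (j : ℕ) < l
      · rw [if_pos hil, if_pos hjl] at hs
        omega
      · have := hstrict l hil (by omega)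
        rw [if_pos hil, if_neg hjl] at hs
        omega
    · rw [if_neg hil, if_neg (by omega)] at hs
      omega
  · have hs := hshift k
    rw [prefixSum_of_le _ le_rfl, prefixSum_of_le _ le_rfl, if_pos i.isLt, if_pos j.isLt] at hs
    omega
  · refine sum_lt_sum (fun l _ => hle l) ⟨i + 1, by simp, ?_⟩
    have hs := hshift (i + 1)
    rw [if_pos (Nat.lt_succ_self _), if_neg (by omega)] at hs
    omega

theorem exists_colCard_eq_of_prefixSum_le (hb : Antitone b) (f : ι → Finset (Fin k))
    (hdom : ∀ j, prefixSum b j ≤ prefixSum (colCard f) j)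
    (htot : ∑ c, b c = ∑ c, colCard f c) :
    ∃ f' : ι → Finset (Fin k), (∀ t, #(f' t) = #(f t)) ∧ colCard f' = b := by
  classical
  induction hN : ∑ j ∈ range (k + 1), prefixSum (colCard f) j using Nat.strong_induction_on
    generalizing f with
  | _ N ih =>
  by_cases hcol : colCard f = b
  · exact ⟨f, fun _ => rfl, hcol⟩
  obtain ⟨f', hcard, hdom', htot', hlt⟩ := exists_move_of_colCard_ne hb hdom htot hcol
  obtain ⟨f'', hcard', hcol'⟩ := ih _ (hN ▸ hlt) f' hdom' htot' rfl
  exact ⟨f'', fun t => (hcard' t).trans (hcard t), hcol'⟩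

theorem exists_card_eq_colCard_eq_of_prefixSum_le (a : ι → ℕ) (hb : Antitone b)
    (hsum : ∑ t, a t = ∑ c, b c) (hdom : ∀ j, prefixSum b j ≤ ∑ t, min (a t) j) :
    ∃ f : ι → Finset (Fin k), (∀ t, #(f t) = a t) ∧ colCard f = b := by
  have hak (t : ι) : a t ≤ k := by
    have hle : ∑ t, a t ≤ ∑ t, min (a t) k := hsum ▸ prefixSum_of_le b le_rfl ▸ hdom k
    have := (sum_eq_sum_iff_of_le fun t _ => min_le_left (a t) k).1
      (le_antisymm (sum_le_sum fun t _ => min_le_left _ _) hle) t (mem_univ t)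
    omega
  set f₀ : ι → Finset (Fin k) := fun t => {c | (c : ℕ) < a t}
  have hf₀ (j : ℕ) : prefixSum (colCard f₀) j = ∑ t, min (a t) j := by
    rw [prefixSum_colCard]
    refine sum_congr rfl fun t _ => ?_
    simp only [f₀, filter_filter, ← lt_min_iff, Fin.card_filter_val_lt]
    exact min_eq_right ((min_le_left _ _).trans (hak t))
  obtain ⟨f, hcard, hcol⟩ :=
    exists_colCard_eq_of_prefixSum_le hb f₀ (fun j => hf₀ j ▸ hdom j)
    (by
      rw [← prefixSum_of_le (colCard f₀) le_rfl, hf₀, ← hsum]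
      exact sum_congr rfl fun t _ => (min_eq_left (hak t)).symm)
  refine ⟨f, fun t => ?_, hcol⟩
  rw [hcard, Fin.card_filter_val_lt, min_eq_right (hak t)]

end GaleRyser

theorem exists_equiv_comp_eq_of_map_univ_val_eq {α β γ : Type*} [Fintype α] [Fintype β]
    {f : α → γ} {g : β → γ} (h : univ.val.map f = univ.val.map g) :
    ∃ e : α ≃ β, ∀ x, g (e x) = f x := by
  classical
  have hcard (c : γ) : Fintype.card {x // f x = c} = Fintype.card {y // g y = c} := by
    simpa [Fintype.card_subtype, Multiset.count_map, eq_comm, Finset.card_def, Finset.filter_val]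
      using congrArg (Multiset.count c) h
  exact ⟨Equiv.ofFiberEquiv fun c => Fintype.equivOfCardEq (hcard c), Equiv.ofFiberEquiv_map _⟩

theorem exists_equiv_fin_antitone {β γ : Type*} [Fintype β] [LinearOrder γ] (d : β → γ) :
    ∃ e : Fin (Fintype.card β) ≃ β, Antitone fun i => d (e i) := by
  let g := d ∘ (Fintype.equivFin β).symm
  exact ⟨(Fin.revPerm.trans (Tuple.sort g)).trans (Fintype.equivFin β).symm,
    fun i j hij => Tuple.monotone_sort g (Fin.rev_le_rev.2 hij)⟩

theorem Finset.map_univ_val_comp_equiv {α β γ : Type*} [Fintype β] (s : Finset α)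
    (e : β ≃ s) (f : α → γ) : univ.val.map (fun i => f (e i)) = s.val.map f := by
  rw [← Function.comp_def f, ← Multiset.map_map, ← Function.comp_def Subtype.val e,
    ← Multiset.map_map, Multiset.map_univ_val_equiv, univ_eq_attach, attach_val,
    Multiset.attach_map_val]

namespace SimpleGraph

variable {V : Type*} {G : SimpleGraph V}

theorem isBipartiteWith_compl_of_forall_adj {C : Set V}
    (h : ∀ ⦃u v⦄, G.Adj u v → (u ∈ C ↔ v ∉ C)) : G.IsBipartiteWith C Cᶜ where
  disjoint := disjoint_compl_right
  mem_of_adj u v huv := by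
    have := h huv
    by_cases hu : u ∈ C <;> simp_all

theorem IsBipartiteWith.sum_degree_le_sum_min [Fintype V] [DecidableRel G.Adj]
    {s t B : Finset V} (h : G.IsBipartiteWith s t) (hB : B ⊆ t) :
    ∑ w ∈ B, G.degree w ≤ ∑ v ∈ s, min (G.degree v) #B :=
  calc ∑ w ∈ B, G.degree w = ∑ w ∈ B, #(s.bipartiteBelow G.Adj w) :=
        sum_congr rfl fun w hw => by
          rw [← card_neighborFinset_eq_degree, isBipartiteWith_bipartiteBelow h (hB hw)]
    _ = ∑ v ∈ s, #(B.bipartiteAbove G.Adj v) :=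
        (sum_card_bipartiteAbove_eq_sum_card_bipartiteBelow _).symm
    _ ≤ ∑ v ∈ s, min (G.degree v) #B :=
        sum_le_sum fun v _ => le_min
          (card_neighborFinset_eq_degree G v ▸ card_le_card fun w hw => by
            simpa [bipartiteAbove] using (mem_filter.1 hw).2)
          (card_le_card (filter_subset _ _))

section BipartiteOfFinsets

variable {α β : Type*}

def bipartiteOfFinsets (f : α → Finset β) : SimpleGraph (α ⊕ β) where
  Adj
    | .inl a, .inr b => b ∈ f a
    | .inr b, .inl a => b ∈ f a
    | _, _ => False
  symm := ⟨by rintro (a | b) (a' | b') h <;> exact h⟩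
  loopless := ⟨by rintro (a | b) h <;> exact h⟩

variable (f : α → Finset β)

theorem isLeft_iff_of_bipartiteOfFinsets_adj {x y : α ⊕ β}
    (h : (bipartiteOfFinsets f).Adj x y) :
    x.isLeft ↔ ¬ y.isLeft := by
  rcases x with a | b <;> rcases y with a' | b' <;> simp_all [bipartiteOfFinsets]

variable [Fintype α] [Fintype β] [DecidableRel (bipartiteOfFinsets f).Adj]

theorem bipartiteOfFinsets_degree_inl (a : α) :
    (bipartiteOfFinsets f).degree (.inl a) = #(f a) := by
  rw [← card_neighborFinset_eq_degree,
    show (bipartiteOfFinsets f).neighborFinset (.inl a) = (f a).map .inr by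
      ext (a' | b) <;> simp only [mem_neighborFinset] <;> simp [bipartiteOfFinsets], card_map]

theorem bipartiteOfFinsets_degree_inr [DecidableEq β] (b : β) :
    (bipartiteOfFinsets f).degree (.inr b) = colCard f b := by
  rw [← card_neighborFinset_eq_degree,
    show (bipartiteOfFinsets f).neighborFinset (.inr b) =
        (univ.filter fun a => b ∈ f a).map .inl by
      ext (a | b') <;> simp only [mem_neighborFinset] <;> simp [bipartiteOfFinsets],
    card_map, colCard]

end BipartiteOfFinsets

theorem exists_antitone_parts_of_forall_adj [Fintype V] [DecidableRel G.Adj] {d : V → ℕ} (hd : ∀ v, G.degree v = d v)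
    {C : Set V} (hC : ∀ ⦃u v⦄, G.Adj u v → (u ∈ C ↔ v ∉ C)) :
    ∃ (m k : ℕ) (a : Fin m → ℕ) (b : Fin k → ℕ),
        Antitone a ∧ Antitone b ∧
        Multiset.map a univ.val + Multiset.map b univ.val = Multiset.map d univ.val ∧
        2 * ∑ i, a i = ∑ v, d v ∧ 2 * ∑ i, b i = ∑ v, d v ∧
        ∀ j : ℕ, prefixSum b j ≤ ∑ i ∈ Icc 1 j, #{t | i ≤ a t} := by
  classical
  set S : Finset V := univ.filter (· ∈ C)
  set T : Finset V := univ.filter (· ∉ C)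
  have hG : G.IsBipartiteWith ↑S ↑T := by
    rw [coe_filter_univ, coe_filter_univ]
    exact isBipartiteWith_compl_of_forall_adj hC
  obtain ⟨eS, hS⟩ := exists_equiv_fin_antitone fun v : S => d v
  obtain ⟨eT, hT⟩ := exists_equiv_fin_antitone fun v : T => d v
  have hsum (s : Finset V) (e : Fin (Fintype.card s) ≃ s) (F : V → ℕ) :
      ∑ i, F (e i) = ∑ v ∈ s, F v :=
    (e.sum_comp fun v : s => F v).trans (sum_coe_sort s F)
  have hhalf : ∑ v ∈ S, d v = ∑ v ∈ T, d v := by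
    simp_rw [← hd]
    exact isBipartiteWith_sum_degrees_eq hG
  have htotal : ∑ v ∈ S, d v + ∑ v ∈ T, d v = ∑ v, d v :=
    sum_filter_add_sum_filter_not univ (· ∈ C) d
  refine ⟨_, _, _, _, hS, hT, ?_, by rw [hsum S eS d]; omega, by rw [hsum T eT d]; omega,
    fun j => ?_⟩
  · rw [map_univ_val_comp_equiv, map_univ_val_comp_equiv, ← Multiset.map_add, filter_val,
      filter_val, Multiset.filter_add_not]
  · let B : Finset V := (univ.filter fun i : Fin (Fintype.card T) => (i : ℕ) < j).map
      (eT.toEmbedding.trans (Function.Embedding.subtype _))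
    have hB : #B ≤ j := by
      rw [card_map, Fin.card_filter_val_lt]
      exact min_le_right _ _
    calc prefixSum (fun i => d (eT i)) j = ∑ w ∈ B, G.degree w := by
          simp only [B, sum_map, hd]; rfl
      _ ≤ ∑ v ∈ S, min (G.degree v) #B :=
          hG.sum_degree_le_sum_min fun w hw => by
            obtain ⟨i, -, rfl⟩ := mem_map.1 hw
            exact (eT i).2
      _ ≤ ∑ v ∈ S, min (d v) j := sum_le_sum fun v _ => hd v ▸ min_le_min_left _ hB
      _ = ∑ i ∈ Icc 1 j, #{t | i ≤ d (eS t)} :=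
          ((sum_Icc_card_le_eq_sum_min _ j).trans (hsum S eS fun v => min (d v) j)).symm

theorem exists_bipartite_realization [Fintype V] {d : V → ℕ} {m k : ℕ}
    {a : Fin m → ℕ} {b : Fin k → ℕ} (hb : Antitone b)
    (hmult : Multiset.map a univ.val + Multiset.map b univ.val = Multiset.map d univ.val)
    (hsum : ∑ t, a t = ∑ c, b c) (hdom : ∀ j, prefixSum b j ≤ ∑ t, min (a t) j) :
    ∃ (G : SimpleGraph V) (_ : DecidableRel G.Adj),
      (∀ v, G.degree v = d v) ∧
        ∃ C : Set V, ∀ ⦃u v⦄, G.Adj u v → (u ∈ C ↔ v ∉ C) := by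
  classical
  obtain ⟨f, hrow, hcol⟩ := exists_card_eq_colCard_eq_of_prefixSum_le a hb hsum hdom
  obtain ⟨e, he⟩ := exists_equiv_comp_eq_of_map_univ_val_eq (f := d) (g := Sum.elim a b) (by
    rw [← hmult, ← univ_disjSum_univ, val_disjSum, Multiset.disjSum, Multiset.map_add,
      Multiset.map_map, Multiset.map_map]
    rfl)
  refine ⟨(bipartiteOfFinsets f).comap e, inferInstance, fun v => ?_, {v | (e v).isLeft},
    fun u v h => isLeft_iff_of_bipartiteOfFinsets_adj f h⟩
  rw [← (Iso.comap e _).degree_eq v, Iso.comap_apply, ← he v]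
  rcases e v with t | c
  · exact (bipartiteOfFinsets_degree_inl f t).trans (hrow t)
  · exact (bipartiteOfFinsets_degree_inr f c).trans (congrFun hcol c)

end SimpleGraph

theorem potentially_bipartite_iff_general (n : ℕ) (d : Fin n → ℕ) :
    (∃ (G : SimpleGraph (Fin n)) (_ : DecidableRel G.Adj),
        (∀ i, G.degree i = d i) ∧
        ∃ C : Set (Fin n), ∀ ⦃u v⦄, G.Adj u v → (u ∈ C ↔ v ∉ C)) ↔
    (∃ (m k : ℕ) (a : Fin m → ℕ) (b : Fin k → ℕ),
        Antitone a ∧ Antitone b ∧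
        Multiset.map a Finset.univ.val + Multiset.map b Finset.univ.val =
          Multiset.map d Finset.univ.val ∧
        2 * ∑ i, a i = ∑ i, d i ∧ 2 * ∑ i, b i = ∑ i, d i ∧
        ∀ j : ℕ,
          ∑ i ∈ Finset.univ.filter (fun i : Fin k => (i : ℕ) < j), b i ≤
          ∑ i ∈ Finset.Icc 1 j, (Finset.univ.filter (fun t : Fin m => i ≤ a t)).card) := by
  constructor
  · rintro ⟨G, _, hdeg, C, hC⟩
    exact SimpleGraph.exists_antitone_parts_of_forall_adj hdeg hC
  · rintro ⟨m, k, a, b, -, hb, hmult, hsa, hsb, hdom⟩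
    exact SimpleGraph.exists_bipartite_realization hb hmult (by omega)
      fun j => sum_Icc_card_le_eq_sum_min a j ▸ hdom j

/-- A graphical degree sequence `d = (d_1 ≥ ⋯ ≥ d_n)` is potentially bipartite
(has a bipartite realization) if and only if the terms of `d` can be
partitioned into two nonincreasing sequences `a` and `b` of equal weights
`|a| = |b| = |d| / 2` such that the conjugate of `a` dominates `b`. -/
theorem potentially_bipartite_iff (n : ℕ) (d : Fin n → ℕ) (hd : Antitone d)
    (hgr : ∃ (G : SimpleGraph (Fin n)) (_ : DecidableRel G.Adj), ∀ i, G.degree i = d i) :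
    (∃ (G : SimpleGraph (Fin n)) (_ : DecidableRel G.Adj),
        (∀ i, G.degree i = d i) ∧
        ∃ C : Set (Fin n), ∀ ⦃u v⦄, G.Adj u v → (u ∈ C ↔ v ∉ C)) ↔
    (∃ (m k : ℕ) (a : Fin m → ℕ) (b : Fin k → ℕ),
        Antitone a ∧ Antitone b ∧
        Multiset.map a Finset.univ.val + Multiset.map b Finset.univ.val =
          Multiset.map d Finset.univ.val ∧
        2 * ∑ i, a i = ∑ i, d i ∧ 2 * ∑ i, b i = ∑ i, d i ∧
        ∀ j : ℕ,
          ∑ i ∈ Finset.univ.filter (fun i : Fin k => (i : ℕ) < j), b i ≤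
          ∑ i ∈ Finset.Icc 1 j, (Finset.univ.filter (fun t : Fin m => i ≤ a t)).card) :=
  potentially_bipartite_iff_general n d
end
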